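/- Let H be a complex inner product space, let f₀, f₁ ∈ H be orthonormal, and let (v₀, v₁) and (w₀, w₁) each be orthonormal pairs in H. For a pair (x₀,x₁) define g¹(x) = (f₀⊗x₀ + f₁⊗x₁)/√2, g²(x) = (f₀⊗x₀ − f₁⊗x₁)/√2, g³(x) = (f₀⊗x₁ + f₁⊗x₀)/√2, g⁴(x) = (f₀⊗x₁ − f₁⊗x₀)/√2. If ⟨g¹(w), gᵏ(v)⟩ = 0 for k = 2, 3, 4 and ⟨w₀, v₀⟩ + ⟨w₁, v₁⟩ = 0, then ⟨w_j, v_k⟩ = 0 for all j, k ∈ {0,1}. -/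

import Mathlib

/-!
The other three vectors are `g¹` of rearranged pairs: `g²(x) = g¹(x₀, -x₁)`,
`g³(x) = g¹(x₁, x₀)`, `g⁴(x) = g¹(x₁, -x₀)`. Since `⟪f ⊗ x, f' ⊗ y⟫ = ⟪f, f'⟫ ⟪x, y⟫` and
`f₀, f₁` are orthonormal, `⟪g¹(a), g¹(b)⟫ = (⟪a₀, b₀⟫ + ⟪a₁, b₁⟫) / 2`. The three hypotheses
on `g¹(w)` thus become linear equations in the four inner products `⟪w_j, v_k⟫`, which
together with `⟪w₀, v₀⟫ + ⟪w₁, v₁⟫ = 0` force all of them to vanish.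
-/

open scoped InnerProductSpace

/-- The vectors `g¹(x), g²(x), g³(x), g⁴(x) ∈ H ⊗ H` (with `H = ℂⁿ`, so `H ⊗ H` is
identified with vectors indexed by pairs) built from the orthonormal pair `f₀, f₁` and a
pair `x = (x₀, x₁)`. -/
noncomputable def gVec {n : ℕ} (k : Fin 4) (f₀ f₁ x₀ x₁ : EuclideanSpace ℂ (Fin n)) :
    EuclideanSpace ℂ (Fin n × Fin n) :=
  (WithLp.equiv 2 (Fin n × Fin n → ℂ)).symm fun p =>
    (if k = 0 then f₀ p.1 * x₀ p.2 + f₁ p.1 * x₁ p.2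
     else if k = 1 then f₀ p.1 * x₀ p.2 - f₁ p.1 * x₁ p.2
     else if k = 2 then f₀ p.1 * x₁ p.2 + f₁ p.1 * x₀ p.2
     else f₀ p.1 * x₁ p.2 - f₁ p.1 * x₀ p.2) / (Real.sqrt 2 : ℂ)

namespace EuclideanSpace

variable {𝕜 ι κ : Type*} [RCLike 𝕜] [Fintype ι] [Fintype κ]

noncomputable def tmul (x : EuclideanSpace 𝕜 ι) (y : EuclideanSpace 𝕜 κ) :
    EuclideanSpace 𝕜 (ι × κ) :=
  WithLp.toLp 2 fun p => x p.1 * y p.2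

theorem inner_tmul_tmul (x x' : EuclideanSpace 𝕜 ι) (y y' : EuclideanSpace 𝕜 κ) :
    ⟪tmul x y, tmul x' y'⟫_𝕜 = ⟪x, x'⟫_𝕜 * ⟪y, y'⟫_𝕜 := by
  simp only [tmul, PiLp.inner_apply, RCLike.inner_apply, Fintype.sum_prod_type,
    Finset.sum_mul_sum, map_mul]
  refine Finset.sum_congr rfl fun i _ => Finset.sum_congr rfl fun j _ => ?_
  ring

end EuclideanSpace

open EuclideanSpace

section
variable {n : ℕ} (f₀ f₁ x₀ x₁ : EuclideanSpace ℂ (Fin n))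

theorem gVec_zero_eq :
    gVec 0 f₀ f₁ x₀ x₁ = (Real.sqrt 2 : ℂ)⁻¹ • (tmul f₀ x₀ + tmul f₁ x₁) := by
  ext p
  simp [gVec, tmul, div_eq_inv_mul, mul_add]

theorem gVec_one_eq : gVec 1 f₀ f₁ x₀ x₁ = gVec 0 f₀ f₁ x₀ (-x₁) := by
  ext p
  simp [gVec, sub_eq_add_neg]

theorem gVec_two_eq : gVec 2 f₀ f₁ x₀ x₁ = gVec 0 f₀ f₁ x₁ x₀ := by
  ext p
  simp [gVec]

theorem gVec_three_eq : gVec 3 f₀ f₁ x₀ x₁ = gVec 0 f₀ f₁ x₁ (-x₀) := by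
  ext p
  simp [gVec, sub_eq_add_neg]

end

theorem inner_gVec_zero {n : ℕ} {f₀ f₁ : EuclideanSpace ℂ (Fin n)} (hf : Orthonormal ℂ ![f₀, f₁])
    (a₀ a₁ b₀ b₁ : EuclideanSpace ℂ (Fin n)) :
    ⟪gVec 0 f₀ f₁ a₀ a₁, gVec 0 f₀ f₁ b₀ b₁⟫_ℂ = (⟪a₀, b₀⟫_ℂ + ⟪a₁, b₁⟫_ℂ) / 2 := by
  rw [orthonormal_iff_ite] at hf
  have h00 : ⟪f₀, f₀⟫_ℂ = 1 := by simpa using hf 0 0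
  have h01 : ⟪f₀, f₁⟫_ℂ = 0 := by simpa using hf 0 1
  have h10 : ⟪f₁, f₀⟫_ℂ = 0 := by simpa using hf 1 0
  have h11 : ⟪f₁, f₁⟫_ℂ = 1 := by simpa using hf 1 1
  have hs : (Real.sqrt 2 : ℂ) ^ 2 = 2 := by
    exact_mod_cast Real.sq_sqrt zero_le_two
  simp only [gVec_zero_eq, inner_smul_left, inner_smul_right, inner_add_left, inner_add_right,
    inner_tmul_tmul, h00, h01, h10, h11, map_inv₀, Complex.conj_ofReal]
  field_simp
  rw [hs]
  ring

theorem stmt15_general {n : ℕ} (f₀ f₁ v₀ v₁ w₀ w₁ : EuclideanSpace ℂ (Fin n))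
    (hf : Orthonormal ℂ ![f₀, f₁])
    (h2 : ⟪gVec 0 f₀ f₁ w₀ w₁, gVec 1 f₀ f₁ v₀ v₁⟫_ℂ = 0)
    (h3 : ⟪gVec 0 f₀ f₁ w₀ w₁, gVec 2 f₀ f₁ v₀ v₁⟫_ℂ = 0)
    (h4 : ⟪gVec 0 f₀ f₁ w₀ w₁, gVec 3 f₀ f₁ v₀ v₁⟫_ℂ = 0)
    (h5 : ⟪w₀, v₀⟫_ℂ + ⟪w₁, v₁⟫_ℂ = 0) :
    ⟪w₀, v₀⟫_ℂ = 0 ∧ ⟪w₀, v₁⟫_ℂ = 0 ∧ ⟪w₁, v₀⟫_ℂ = 0 ∧ ⟪w₁, v₁⟫_ℂ = 0 := by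
  rw [gVec_one_eq, inner_gVec_zero hf, inner_neg_right] at h2
  rw [gVec_two_eq, inner_gVec_zero hf] at h3
  rw [gVec_three_eq, inner_gVec_zero hf, inner_neg_right] at h4
  exact ⟨by linear_combination h5 / 2 + h2, by linear_combination h3 + h4,
    by linear_combination h3 - h4, by linear_combination h5 / 2 - h2⟩

/-- the support-orthogonality step: if `⟨g¹(w), gᵏ(v)⟩ = 0` for
`k = 2, 3, 4` and `⟨w₀, v₀⟩ + ⟨w₁, v₁⟩ = 0`, then `⟨w_j, v_k⟩ = 0` for all `j, k`. -/
theorem stmt15 {n : ℕ} (f₀ f₁ v₀ v₁ w₀ w₁ : EuclideanSpace ℂ (Fin n))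
    (hf : Orthonormal ℂ ![f₀, f₁])
    (hv : Orthonormal ℂ ![v₀, v₁]) (hw : Orthonormal ℂ ![w₀, w₁])
    (h2 : ⟪gVec 0 f₀ f₁ w₀ w₁, gVec 1 f₀ f₁ v₀ v₁⟫_ℂ = 0)
    (h3 : ⟪gVec 0 f₀ f₁ w₀ w₁, gVec 2 f₀ f₁ v₀ v₁⟫_ℂ = 0)
    (h4 : ⟪gVec 0 f₀ f₁ w₀ w₁, gVec 3 f₀ f₁ v₀ v₁⟫_ℂ = 0)
    (h5 : ⟪w₀, v₀⟫_ℂ + ⟪w₁, v₁⟫_ℂ = 0) :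
    ⟪w₀, v₀⟫_ℂ = 0 ∧ ⟪w₀, v₁⟫_ℂ = 0 ∧ ⟪w₁, v₀⟫_ℂ = 0 ∧ ⟪w₁, v₁⟫_ℂ = 0 :=
  stmt15_general f₀ f₁ v₀ v₁ w₀ w₁ hf h2 h3 h4 h5
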